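/- Let G be a k-uniform supertree with n vertices, m = (n−1)/(k−1) edges, and q pendent vertices, where n − m + 1 ≤ q ≤ n − 2, maximizing the signless Laplacian spectral radius among all such supertrees. Then G has degree sequence π = (q + 1 + m − n, 2, 2, ..., 2, 1, ..., 1) with n − q − 1 entries equal to 2 and q entries equal to 1; that is, G has exactly one vertex of degree greater than 2 and all non-pendent, non-maximal vertices have degree exactly 2. -/

import Mathlib

/-!
Let `x` be a maximiser of `qform k E` on the nonnegative part of the unit `ℓ^k`-sphere, so that
`qform k E x = q(E)`. Connectivity forces `x > 0`: raising the zero coordinates to `s` gains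
order `s ^ z` with `z < k` in the product of an edge meeting both zero and positive coordinates,
and costs only order `s ^ k` in the normalisation.

Suppose two vertices `u ≠ v` have degree at least `3`, with `x v ≤ x u`. Some edge `e` at `v` has
all its other vertices separated from `u` once `e` is removed; replacing `e` by `e - v + u`
gives a supertree with the same pendent vertices. Along `x + t (𝟙_u - 𝟙_v)` the form of `E`
stays within `o(t)` of `q(E)` times the normalisation (first-order optimality of `x`), while the
moved edge adds at least `2 k t ∏_{e - v} x`. So the new supertree has larger `q`, contradicting
maximality. Hence at most one vertex has degree above `2`, and its degree is forced by the degree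
sum `k m` and the vertex count `n = (k - 1) m + 1`.
-/

open scoped Classical BigOperators

namespace SLT

variable {V : Type*}

/-- A hypergraph (edge set over vertex type `V`) is `k`-uniform if every edge has exactly `k` vertices. -/
def IsUniform (k : ℕ) (E : Finset (Finset V)) : Prop :=
  ∀ e ∈ E, e.card = k

/-- The degree of a vertex: the number of edges containing it. -/
noncomputable def degree (E : Finset (Finset V)) (v : V) : ℕ :=
  (E.filter (fun e => v ∈ e)).card

/-- `Chains vs es` : the alternating sequence of vertices `vs` and edges `es` forms a
walk, i.e. consecutive vertices both lie in the corresponding edge. -/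
def Chains : List V → List (Finset V) → Prop
  | [_], [] => True
  | u :: v :: vs, e :: es => u ∈ e ∧ v ∈ e ∧ Chains (v :: vs) es
  | _, _ => False

/-- A path in a hypergraph: distinct vertices, distinct edges, all edges in `E`,
with consecutive vertices in the corresponding edge. -/
def IsPath (E : Finset (Finset V)) (vs : List V) (es : List (Finset V)) : Prop :=
  vs.Nodup ∧ es.Nodup ∧ (∀ e ∈ es, e ∈ E) ∧ Chains vs es

/-- A hypergraph is connected if any two vertices are joined by a path. -/
def HConnected (E : Finset (Finset V)) : Prop :=
  ∀ u v : V, ∃ vs es, IsPath E vs es ∧ vs.head? = some u ∧ vs.getLast? = some v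

/-- A cycle: at least two distinct edges, distinct vertices, closing up at the first vertex. -/
def IsCycle (E : Finset (Finset V)) (vs : List V) (es : List (Finset V)) : Prop :=
  2 ≤ es.length ∧ vs.Nodup ∧ es.Nodup ∧ (∀ e ∈ es, e ∈ E) ∧
  ∃ u, vs.head? = some u ∧ Chains (vs ++ [u]) es

/-- A `k`-uniform supertree: connected and acyclic `k`-uniform hypergraph. -/
def IsSupertree (k : ℕ) (E : Finset (Finset V)) : Prop :=
  IsUniform k E ∧ HConnected E ∧ ∀ vs es, ¬ IsCycle E vs es

/-- The quadratic form `x^T (Q(G) x^{k-1})` of the signless Laplacian tensor of a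
`k`-uniform hypergraph. -/
noncomputable def qform (k : ℕ) (E : Finset (Finset V)) (x : V → ℝ) : ℝ :=
  ∑ e ∈ E, ((∑ i ∈ e, x i ^ k) + k * ∏ i ∈ e, x i)

/-- The `i`-th component of `Q(G) x^{k-1}` for a `k`-uniform hypergraph. -/
noncomputable def Qcomp (k : ℕ) (E : Finset (Finset V)) (x : V → ℝ) (i : V) : ℝ :=
  ∑ e ∈ E.filter (fun e => i ∈ e), (x i ^ (k-1) + ∏ j ∈ e.erase i, x j)

/-- The signless Laplacian spectral radius `q(G)`, via Qi's variational characterization: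
the supremum of the quadratic form over nonnegative vectors with `∑ x_v^k = 1`. -/
noncomputable def qrad [Fintype V] (k : ℕ) (E : Finset (Finset V)) : ℝ :=
  sSup {r | ∃ x : V → ℝ, (∀ v, 0 ≤ x v) ∧ (∑ v, x v ^ k) = 1 ∧ r = qform k E x}

/-- `x` is the principal eigenvector of `Q(G)`: positive, unit (`∑ x_v^k = 1`), and an
eigenvector for the eigenvalue `q(G)`. -/
def IsPrincipalEig [Fintype V] (k : ℕ) (E : Finset (Finset V)) (x : V → ℝ) : Prop :=
  (∀ v, 0 < x v) ∧ (∑ v, x v ^ k) = 1 ∧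
  ∀ i, Qcomp k E x i = qrad k E * x i ^ (k-1)

/-- The degree sequence of a hypergraph, as a multiset. -/
noncomputable def degSeq [Fintype V] (E : Finset (Finset V)) : Multiset ℕ :=
  Finset.univ.val.map (degree E)

/-- The number of pendent (degree-1) vertices. -/
noncomputable def pendentCount [Fintype V] (E : Finset (Finset V)) : ℕ :=
  (Finset.univ.filter (fun v => degree E v = 1)).card

section Walks

variable {F : Finset (Finset V)} {a b c : V}

@[simp] lemma not_chains_nil (es : List (Finset V)) : ¬ Chains ([] : List V) es := by
  cases es <;> simp [Chains]

@[simp] lemma chains_singleton_iff (es : List (Finset V)) : Chains [a] es ↔ es = [] := by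
  cases es <;> simp [Chains]

lemma chains_cons_cons_iff {vs : List V} {es : List (Finset V)} :
    Chains (a :: b :: vs) es ↔
      ∃ e es', es = e :: es' ∧ a ∈ e ∧ b ∈ e ∧ Chains (b :: vs) es' := by
  cases es <;> simp [Chains]

lemma Chains.length_eq {vs : List V} {es : List (Finset V)} (h : Chains vs es) :
    vs.length = es.length + 1 := by
  induction vs generalizing es with
  | nil => simp at h
  | cons a vs ih =>
    cases vs with
    | nil => simp_all
    | cons b vs =>
      obtain ⟨e, es, rfl, -, -, h⟩ := chains_cons_cons_iff.mp h
      simpa using ih h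

lemma chains_append_cons_iff {xs ys : List V} {es : List (Finset V)} :
    Chains (xs ++ a :: ys) es ↔
      ∃ es₁ es₂, es = es₁ ++ es₂ ∧ Chains (xs ++ [a]) es₁ ∧
        Chains (a :: ys) es₂ := by
  induction xs generalizing es with
  | nil => simp
  | cons x xs ih =>
    cases xs with
    | nil =>
      simp only [List.nil_append, List.cons_append, chains_cons_cons_iff, chains_singleton_iff]
      constructor
      · rintro ⟨e, es, rfl, hx, ha, h⟩
        exact ⟨[e], es, rfl, ⟨e, [], rfl, hx, ha, rfl⟩, h⟩
      · rintro ⟨_, es₂, rfl, ⟨e, _, rfl, hx, ha, rfl⟩, h⟩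
        exact ⟨e, es₂, rfl, hx, ha, h⟩
    | cons y xs =>
      simp only [List.cons_append, chains_cons_cons_iff] at ih ⊢
      constructor
      · rintro ⟨e, es, rfl, hx, hy, h⟩
        obtain ⟨es₁, es₂, rfl, h₁, h₂⟩ := ih.mp h
        exact ⟨e :: es₁, es₂, rfl, ⟨e, es₁, rfl, hx, hy, h₁⟩, h₂⟩
      · rintro ⟨_, es₂, rfl, ⟨e, es₁, rfl, hx, hy, h₁⟩, h₂⟩
        exact ⟨e, es₁ ++ es₂, rfl, hx, hy, ih.mpr ⟨es₁, es₂, rfl, h₁, h₂⟩⟩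

lemma Chains.append {xs ys : List V} {es₁ es₂ : List (Finset V)}
    (h₁ : Chains (xs ++ [a]) es₁) (h₂ : Chains (a :: ys) es₂) :
    Chains (xs ++ a :: ys) (es₁ ++ es₂) :=
  chains_append_cons_iff.mpr ⟨es₁, es₂, rfl, h₁, h₂⟩

lemma Chains.concat {vs : List V} {es : List (Finset V)} {e : Finset V} (h : Chains vs es)
    (hb : vs.getLast? = some b) (hbe : b ∈ e) (hce : c ∈ e) :
    Chains (vs ++ [c]) (es ++ [e]) := by
  obtain ⟨xs, rfl⟩ := List.getLast?_eq_some_iff.mp hb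
  simpa using h.append (ys := [c]) (chains_cons_cons_iff.mpr ⟨e, [], rfl, hbe, hce, by simp⟩)

lemma Chains.split_edges {vs : List V} {es₁ es₂ : List (Finset V)}
    (h : Chains vs (es₁ ++ es₂)) :
    ∃ xs a ys, vs = xs ++ a :: ys ∧ Chains (xs ++ [a]) es₁ ∧ Chains (a :: ys) es₂ := by
  have hlen : es₁.length < vs.length := by simp [h.length_eq]
  obtain ⟨xs, a, ys, rfl, hxs⟩ : ∃ xs a ys, vs = xs ++ a :: ys ∧ xs.length = es₁.length :=
    ⟨vs.take es₁.length, vs[es₁.length], vs.drop (es₁.length + 1), by simp,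
      by simp only [List.length_take]; omega⟩
  obtain ⟨es₁', es₂', hes, h₁, h₂⟩ := chains_append_cons_iff.mp h
  obtain ⟨rfl, rfl⟩ := List.append_inj hes.symm (by simpa [hxs] using h₁.length_eq.symm)
  exact ⟨xs, a, ys, rfl, h₁, h₂⟩

lemma Chains.head_mem {vs : List V} {e : Finset V} {es : List (Finset V)}
    (h : Chains (a :: vs) (e :: es)) : a ∈ e := by
  cases vs with
  | nil => simp at h
  | cons b vs => exact h.1

lemma IsPath.prefix {xs ys : List V} {es₁ es₂ : List (Finset V)}
    (h : IsPath F (xs ++ a :: ys) (es₁ ++ es₂)) (h₁ : Chains (xs ++ [a]) es₁) :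
    IsPath F (xs ++ [a]) es₁ := by
  obtain ⟨hvs, hes, hesF, -⟩ := h
  refine ⟨hvs.sublist ?_, hes.sublist (List.sublist_append_left _ _),
    fun e he => hesF e (by simp [he]), h₁⟩
  exact (List.singleton_sublist.mpr (by simp)).append_left xs

lemma IsPath.concat {vs : List V} {es : List (Finset V)} {f : Finset V} (h : IsPath F vs es)
    (hb : vs.getLast? = some b) (hf : f ∈ F) (hbf : b ∈ f) (hcf : c ∈ f) (hfes : f ∉ es)
    (hc : c ∉ vs) : IsPath F (vs ++ [c]) (es ++ [f]) := by
  obtain ⟨hvs, hes, hesF, hch⟩ := h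
  refine ⟨?_, ?_, ?_, hch.concat hb hbf hcf⟩
  · simpa [List.nodup_append] using ⟨hvs, fun x hx hxc => hc (hxc ▸ hx)⟩
  · simpa [List.nodup_append] using ⟨hes, fun x hx hxf => hfes (hxf ▸ hx)⟩
  · simpa [or_imp, forall_and] using ⟨hesF, hf⟩

def Adj (F : Finset (Finset V)) (a b : V) : Prop :=
  ∃ e ∈ F, a ∈ e ∧ b ∈ e

def Reach (F : Finset (Finset V)) : V → V → Prop :=
  Relation.ReflTransGen (Adj F)

lemma Adj.symm (h : Adj F a b) : Adj F b a :=
  let ⟨e, he, ha, hb⟩ := h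
  ⟨e, he, hb, ha⟩

lemma reach_of_mem {e : Finset V} (he : e ∈ F) (ha : a ∈ e) (hb : b ∈ e) : Reach F a b :=
  .single ⟨e, he, ha, hb⟩

lemma Reach.refl (F : Finset (Finset V)) (a : V) : Reach F a a :=
  Relation.ReflTransGen.refl

lemma Reach.trans (h₁ : Reach F a b) (h₂ : Reach F b c) : Reach F a c :=
  Relation.ReflTransGen.trans h₁ h₂

lemma Reach.symm (h : Reach F a b) : Reach F b a :=
  Relation.ReflTransGen.mono (fun _ _ => Adj.symm) _ _ (Relation.ReflTransGen.swap _ _ h)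

lemma Reach.mono {F' : Finset (Finset V)} (hF : F ⊆ F') (h : Reach F a b) : Reach F' a b :=
  Relation.ReflTransGen.mono (fun _ _ ⟨e, he, ha, hb⟩ => ⟨e, hF he, ha, hb⟩) _ _ h

lemma reach_of_chains {vs : List V} {es : List (Finset V)} (h : Chains vs es)
    (hF : ∀ e ∈ es, e ∈ F) (ha : vs.head? = some a) (hb : vs.getLast? = some b) :
    Reach F a b := by
  induction vs generalizing es a with
  | nil => simp at ha
  | cons x vs ih =>
    obtain rfl : x = a := by simpa using ha
    cases vs with
    | nil =>
      obtain rfl : x = b := by simpa using hb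
      exact .refl F x
    | cons y vs =>
      obtain ⟨e, es, rfl, hx, hy, h⟩ := chains_cons_cons_iff.mp h
      exact Relation.ReflTransGen.head ⟨e, hF e (by simp), hx, hy⟩
        (ih h (fun f hf => hF f (by simp [hf])) rfl (by simpa using hb))

lemma Reach.exists_isPath (h : Reach F a b) :
    ∃ vs es, IsPath F vs es ∧ vs.head? = some a ∧ vs.getLast? = some b := by
  induction h with
  | refl => exact ⟨[a], [], ⟨by simp, by simp, by simp, by simp [Chains]⟩, rfl, rfl⟩
  | @tail b c _ hbc ih =>
    obtain ⟨f, hf, hbf, hcf⟩ := hbc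
    obtain ⟨vs, es, hpath, ha, hb⟩ := ih
    by_cases hc : c ∈ vs
    · obtain ⟨xs, ys, rfl⟩ := List.append_of_mem hc
      obtain ⟨es₁, es₂, rfl, h₁, -⟩ := chains_append_cons_iff.mp hpath.2.2.2
      exact ⟨xs ++ [c], es₁, hpath.prefix h₁, by cases xs <;> simp_all, by simp⟩
    by_cases hfes : f ∈ es
    · obtain ⟨es₁, es₂, rfl⟩ := List.append_of_mem hfes
      obtain ⟨xs, d, ys, rfl, h₁, h₂⟩ := hpath.2.2.2.split_edges
      refine ⟨xs ++ [d] ++ [c], es₁ ++ [f],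
        (hpath.prefix h₁).concat (by simp) hf h₂.head_mem hcf ?_ ?_, by cases xs <;> simp_all,
        by simp⟩
      · exact fun h => (List.nodup_append.mp hpath.2.1).2.2 f h f (by simp) rfl
      · exact fun h => hc (by simp at h ⊢; tauto)
    · exact ⟨vs ++ [c], es ++ [f], hpath.concat hb hf hbf hcf hfes hc, by cases vs <;> simp_all,
        by simp⟩

lemma hConnected_iff : HConnected F ↔ ∀ a b, Reach F a b :=
  ⟨fun h a b =>
    let ⟨_, _, ⟨_, _, hF, hch⟩, ha, hb⟩ := h a b
    reach_of_chains hch hF ha hb,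
  fun h a b => (h a b).exists_isPath⟩

lemma Reach.erase_or {e : Finset V} (h : Reach F a b) :
    Reach (F.erase e) a b ∨ ∃ y ∈ e, Reach (F.erase e) a y := by
  induction h with
  | refl => exact .inl (.refl _ _)
  | @tail b c _ hbc ih =>
    obtain ⟨f, hf, hbf, hcf⟩ := hbc
    by_cases hfe : f = e
    · subst hfe
      exact ih.elim (fun h => .inr ⟨b, hbf, h⟩) .inr
    · have hf' : f ∈ F.erase e := Finset.mem_erase.mpr ⟨hfe, hf⟩
      exact ih.imp (fun h => h.trans (reach_of_mem hf' hbf hcf)) id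

lemma Reach.exists_edge_crossing {S : Set V} (h : Reach F a b) (ha : a ∈ S) (hb : b ∉ S) :
    ∃ f ∈ F, ∃ x ∈ f, ∃ y ∈ f, x ∈ S ∧ y ∉ S := by
  induction h with
  | refl => exact absurd ha hb
  | @tail b c _ hbc ih =>
    obtain ⟨f, hf, hbf, hcf⟩ := hbc
    by_cases hbS : b ∈ S
    · exact ⟨f, hf, b, hbf, c, hcf, hbS, hb⟩
    · exact ih hbS

lemma not_reach_erase (hF : ∀ vs es, ¬ IsCycle F vs es) {e : Finset V} (he : e ∈ F)
    (hab : a ≠ b) (ha : a ∈ e) (hb : b ∈ e) : ¬ Reach (F.erase e) a b := by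
  intro h
  obtain ⟨vs, es, ⟨hvs, hes, hesF, hch⟩, hva, hvb⟩ := h.exists_isPath
  have hne : es ≠ [] := by
    rintro rfl
    obtain ⟨x, rfl⟩ := List.length_eq_one_iff.mp hch.length_eq
    simp_all
  refine hF vs (es ++ [e]) ⟨?_, hvs, ?_, ?_, a, hva, hch.concat hvb hb ha⟩
  · simpa [Nat.one_le_iff_ne_zero] using hne
  · simpa [List.nodup_append] using ⟨hes, fun f hf hfe => by simpa [hfe] using hesF f hf⟩
  · simpa [or_imp, forall_and] using ⟨fun f hf => Finset.mem_of_mem_erase (hesF f hf), he⟩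

lemma ne_of_append_singleton_eq {vs xs zs : List V} {w x y : V} (hvs : vs.Nodup)
    (hw : vs.head? = some w) (hlen : 2 ≤ vs.length) (h : vs ++ [w] = xs ++ x :: y :: zs) :
    x ≠ y := by
  rintro rfl
  obtain ⟨r, rfl⟩ := List.head?_eq_some_iff.mp hw
  have hr : (r ++ [w]).Nodup := List.nodup_append_comm.mp (by simpa using hvs)
  cases xs with
  | nil =>
    cases r with
    | nil => simp at hlen
    | cons r₀ r => simp_all
  | cons x₀ xs =>
    simp only [List.cons_append, List.cons.injEq] at h
    rw [h.2] at hr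
    simp [List.nodup_append] at hr

lemma IsCycle.exists_reach_erase {vs : List V} {es : List (Finset V)} (h : IsCycle F vs es)
    {e : Finset V} (he : e ∈ es) :
    ∃ x ∈ e, ∃ y ∈ e, x ≠ y ∧ Reach (F.erase e) x y := by
  obtain ⟨hlen, hvs, hes, hesF, w, hw, hch⟩ := h
  obtain ⟨es₁, es₂, rfl⟩ := List.append_of_mem he
  obtain ⟨xs, x, ys, hsplit, h₁, h₂⟩ := hch.split_edges
  obtain ⟨y, zs, rfl⟩ : ∃ y zs, ys = y :: zs := by
    cases ys with
    | nil => simp at h₂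
    | cons y zs => exact ⟨y, zs, rfl⟩
  obtain ⟨_, _, he', hx, hy, h₃⟩ := chains_cons_cons_iff.mp h₂
  obtain ⟨rfl, rfl⟩ := List.cons.inj he'
  have hF : ∀ f ∈ es₁ ++ es₂, f ∈ F.erase e := by
    intro f hf
    refine Finset.mem_erase.mpr ⟨?_, hesF f (by simp at hf ⊢; tauto)⟩
    rintro rfl
    exact (List.nodup_cons.mp (List.nodup_middle.mp hes)).1 hf
  refine ⟨y, hy, x, hx, (ne_of_append_singleton_eq hvs hw ?_ hsplit).symm, ?_⟩
  · have h₁ := congrArg List.length hsplit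
    have h₂ := hch.length_eq
    simp only [List.length_append, List.length_cons, List.length_nil] at h₁ h₂ hlen
    omega
  · refine (reach_of_chains (b := w) h₃ (fun f hf => hF f (by simp [hf])) rfl ?_).trans
      (reach_of_chains h₁ (fun f hf => hF f (by simp [hf])) ?_ (by simp))
    · have := congrArg List.getLast? hsplit
      rw [List.getLast?_concat, List.getLast?_append_of_ne_nil _ (List.cons_ne_nil _ _),
        List.getLast?_cons_cons] at this
      exact this.symm
    · have := congrArg List.head? hsplit
      cases xs <;> cases vs <;> simp_all

end Walks

section Supertree

variable {k : ℕ} {E : Finset (Finset V)} {u v : V}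

lemma HConnected.exists_mem (hE : HConnected E) (huv : u ≠ v) : ∃ e ∈ E, u ∈ e := by
  obtain ⟨e, he, x, hx, -, -, rfl, -⟩ :=
    (hConnected_iff.mp hE u v).exists_edge_crossing (S := {u}) rfl huv.symm
  exact ⟨e, he, hx⟩

lemma HConnected.one_le_degree [Fintype V] (hE : HConnected E) (hV : 2 ≤ Fintype.card V)
    (u : V) : 1 ≤ degree E u := by
  obtain ⟨w, hw⟩ := Fintype.exists_ne_of_one_lt_card hV u
  obtain ⟨e, he, hue⟩ := hE.exists_mem hw.symm
  exact Finset.card_pos.mpr ⟨e, Finset.mem_filter.mpr ⟨he, hue⟩⟩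

lemma HConnected.sup_eq_univ [Fintype V] (hE : HConnected E) (hV : 2 ≤ Fintype.card V) :
    E.sup id = Finset.univ := by
  refine Finset.eq_univ_of_forall fun u => ?_
  obtain ⟨w, hw⟩ := Fintype.exists_ne_of_one_lt_card hV u
  obtain ⟨e, he, hue⟩ := hE.exists_mem hw.symm
  exact Finset.le_sup (f := id) he hue

lemma IsSupertree.exists_inter_sup_eq_singleton (hT : IsSupertree k E) (hk : 0 < k)
    {F : Finset (Finset V)} (hFE : F ⊂ E) (hF : (F.sup id).Nonempty)
    (hconn : ∀ a ∈ F.sup id, ∀ b ∈ F.sup id, Reach F a b) :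
    ∃ e ∈ E, e ∉ F ∧ ∃ c, e ∩ F.sup id = {c} := by
  obtain ⟨e, he, heF, c, hce, hcF⟩ : ∃ e ∈ E, e ∉ F ∧ ∃ c ∈ e, c ∈ F.sup id := by
    obtain ⟨g, hgE, hgF⟩ := Finset.exists_of_ssubset hFE
    obtain ⟨y, hy⟩ := Finset.card_pos.mp (hT.1 g hgE ▸ hk)
    obtain ⟨x, hx⟩ := hF
    by_cases hyF : y ∈ F.sup id
    · exact ⟨g, hgE, hgF, y, hy, hyF⟩
    obtain ⟨f, hf, a, ha, b, hb, haF, hbF⟩ :=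
      (hConnected_iff.mp hT.2.1 x y).exists_edge_crossing (S := ↑(F.sup id)) hx hyF
    exact ⟨f, hf, fun hfF => hbF (Finset.le_sup (f := id) hfF hb), a, ha, haF⟩
  refine ⟨e, he, heF, c,
    Finset.eq_singleton_iff_unique_mem.mpr ⟨Finset.mem_inter.mpr ⟨hce, hcF⟩, ?_⟩⟩
  intro c' hc'
  obtain ⟨hc'e, hc'F⟩ := Finset.mem_inter.mp hc'
  by_contra hne
  refine not_reach_erase hT.2.2 he hne hc'e hce ((hconn c' hc'F c hcF).mono fun f hf => ?_)
  exact Finset.mem_erase.mpr ⟨fun hfe => heF (hfe ▸ hf), hFE.1 hf⟩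

lemma IsSupertree.card_sup_eq_of_subset (hT : IsSupertree k E) (hk : 0 < k)
    {F : Finset (Finset V)} (hFE : F ⊆ E) (hne : (F.sup id).Nonempty)
    (hconn : ∀ a ∈ F.sup id, ∀ b ∈ F.sup id, Reach F a b)
    (hF : (F.sup id).card = (k - 1) * F.card + 1) :
    (E.sup id).card = (k - 1) * E.card + 1 := by
  induction hj : E.card - F.card generalizing F with
  | zero => rwa [← Finset.eq_of_subset_of_card_le hFE (by omega)]
  | succ j ih =>
    have hFE' : F ⊂ E := Finset.ssubset_iff_subset_ne.mpr ⟨hFE, by rintro rfl; omega⟩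
    obtain ⟨e, he, heF, c, hc⟩ := hT.exists_inter_sup_eq_singleton hk hFE' hne hconn
    obtain ⟨hce, hcF⟩ := Finset.mem_inter.mp (hc ▸ Finset.mem_singleton_self c)
    have hsup : (insert e F).sup id = e ∪ F.sup id := Finset.sup_insert
    refine ih (Finset.insert_subset he hFE) (hsup ▸ hne.mono Finset.subset_union_right) ?_ ?_
      (by rw [Finset.card_insert_of_notMem heF]; omega)
    · have hto : ∀ a ∈ (insert e F).sup id, Reach (insert e F) a c := by
        intro a ha
        rcases Finset.mem_union.mp (hsup ▸ ha) with ha | ha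
        · exact reach_of_mem (Finset.mem_insert_self e F) ha hce
        · exact (hconn a ha c hcF).mono (Finset.subset_insert e F)
      exact fun a ha b hb => (hto a ha).trans (hto b hb).symm
    · have h := Finset.card_union_add_card_inter e (F.sup id)
      rw [hc, Finset.card_singleton, hT.1 e he] at h
      rw [hsup, Finset.card_insert_of_notMem heF, mul_add]
      omega

lemma IsSupertree.card_eq [Fintype V] (hT : IsSupertree k E) (hk : 0 < k)
    (hV : 2 ≤ Fintype.card V) : Fintype.card V = (k - 1) * E.card + 1 := by
  obtain ⟨u⟩ : Nonempty V := Fintype.card_pos_iff.mp (by omega)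
  obtain ⟨w, hw⟩ := Fintype.exists_ne_of_one_lt_card hV u
  obtain ⟨e, he, hue⟩ := hT.2.1.exists_mem hw.symm
  rw [← Finset.card_univ, ← hT.2.1.sup_eq_univ hV]
  refine hT.card_sup_eq_of_subset hk (F := {e}) (by simpa using he) ⟨u, by simpa using hue⟩
    ?_ ?_
  · simp only [Finset.sup_singleton, id]
    exact fun a ha b hb => reach_of_mem (Finset.mem_singleton_self e) ha hb
  · simp only [Finset.sup_singleton, id, hT.1 e he, Finset.card_singleton, mul_one]
    omega

end Supertree

section QuadraticForm

variable {k : ℕ} {E : Finset (Finset V)} {x : V → ℝ}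

lemma qform_smul (hU : IsUniform k E) (c : ℝ) (x : V → ℝ) :
    qform k E (fun v => c * x v) = c ^ k * qform k E x := by
  simp only [qform, Finset.mul_sum, mul_add, Finset.prod_mul_distrib, mul_pow]
  refine Finset.sum_congr rfl fun e he => ?_
  rw [Finset.prod_const, hU e he]
  ring

lemma qform_add_le {y : V → ℝ} (hx : ∀ v, 0 ≤ x v) (hxy : ∀ v, x v ≤ y v) {e : Finset V}
    (he : e ∈ E) : qform k E x + k * (∏ i ∈ e, y i - ∏ i ∈ e, x i) ≤ qform k E y := by
  set g : Finset V → ℝ := fun f =>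
    (∑ i ∈ f, y i ^ k - ∑ i ∈ f, x i ^ k) + k * (∏ i ∈ f, y i - ∏ i ∈ f, x i)
  have hsum : ∀ f : Finset V, ∑ i ∈ f, x i ^ k ≤ ∑ i ∈ f, y i ^ k := fun f =>
    Finset.sum_le_sum fun i _ => pow_le_pow_left₀ (hx i) (hxy i) k
  have hprod : ∀ f : Finset V, ∏ i ∈ f, x i ≤ ∏ i ∈ f, y i := fun f =>
    Finset.prod_le_prod (fun i _ => hx i) fun i _ => hxy i
  have hg : ∀ f, 0 ≤ g f := fun f =>
    add_nonneg (sub_nonneg.mpr (hsum f)) (mul_nonneg k.cast_nonneg (sub_nonneg.mpr (hprod f)))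
  have hqform : qform k E y - qform k E x = ∑ f ∈ E, g f := by
    unfold qform
    rw [← Finset.sum_sub_distrib]
    refine Finset.sum_congr rfl fun f _ => ?_
    simp only [g]
    ring
  have := Finset.single_le_sum (fun f _ => hg f) he
  linarith [hsum e]

lemma qform_nonneg (hx : ∀ v, 0 ≤ x v) : 0 ≤ qform k E x :=
  Finset.sum_nonneg fun _ _ => add_nonneg (Finset.sum_nonneg fun i _ => pow_nonneg (hx i) k)
    (mul_nonneg k.cast_nonneg (Finset.prod_nonneg fun i _ => hx i))

end QuadraticForm

section MoveEdge

variable {k : ℕ} {E : Finset (Finset V)} {e : Finset V} {u v : V}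

noncomputable def moveEdge (E : Finset (Finset V)) (e : Finset V) (u v : V) : Finset (Finset V) :=
  insert (insert u (e.erase v)) (E.erase e)

lemma isUniform_moveEdge (hU : IsUniform k E) (he : e ∈ E) (hv : v ∈ e) (hu : u ∉ e) :
    IsUniform k (moveEdge E e u v) := by
  intro f hf
  rcases Finset.mem_insert.mp hf with rfl | hf
  · rw [Finset.card_insert_of_notMem (fun h => hu (Finset.mem_of_mem_erase h)),
      Finset.card_erase_add_one hv, hU e he]
  · exact hU f (Finset.mem_of_mem_erase hf)

lemma degree_moveEdge (he : e ∈ E) (hv : v ∈ e) (hu : u ∉ e)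
    (he' : insert u (e.erase v) ∉ E) (w : V) :
    degree (moveEdge E e u v) w + (if w = v then 1 else 0) =
      degree E w + (if w = u then 1 else 0) := by
  have herase : degree (E.erase e) w + (if w ∈ e then 1 else 0) = degree E w := by
    simp only [degree, Finset.filter_erase]
    split_ifs with hw
    · exact Finset.card_erase_add_one (Finset.mem_filter.mpr ⟨he, hw⟩)
    · rw [Finset.erase_eq_of_notMem (by simp [hw]), add_zero]
  have hinsert : degree (moveEdge E e u v) w =
      degree (E.erase e) w + (if w ∈ insert u (e.erase v) then 1 else 0) := by
    simp only [degree, moveEdge, Finset.filter_insert]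
    split_ifs
    · exact Finset.card_insert_of_notMem fun h =>
        he' (Finset.mem_of_mem_erase (Finset.mem_filter.mp h).1)
    · rfl
  rw [hinsert, ← herase]
  by_cases hwu : w = u
  · subst hwu
    have : w ≠ v := fun h => hu (h ▸ hv)
    simp [hu, this]
  · by_cases hwv : w = v
    · subst hwv; simp [hv, hwu]
    · simp [hwu, hwv]

lemma qform_moveEdge (he : e ∈ E) (hv : v ∈ e) (hu : u ∉ e) (he' : insert u (e.erase v) ∉ E)
    (y : V → ℝ) : qform k (moveEdge E e u v) y =
      qform k E y + (y u ^ k - y v ^ k) + k * (y u - y v) * ∏ i ∈ e.erase v, y i := by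
  have hu' : u ∉ e.erase v := fun h => hu (Finset.mem_of_mem_erase h)
  unfold qform moveEdge
  rw [Finset.sum_insert (fun h => he' (Finset.mem_of_mem_erase h)), ← Finset.add_sum_erase E _ he,
    Finset.sum_insert hu', Finset.prod_insert hu', ← Finset.add_sum_erase e _ hv,
    ← Finset.mul_prod_erase e _ hv]
  ring

lemma reach_erase_of_forall_not_reach (hE : HConnected E)
    (hsep : ∀ x ∈ e, x ≠ v → ¬ Reach (E.erase e) x u) :
    Reach (E.erase e) u v := by
  rcases (hConnected_iff.mp hE u v).erase_or (e := e) with h | ⟨y, hy, h⟩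
  · exact h
  · by_cases hyv : y = v
    · exact hyv ▸ h
    · exact absurd h.symm (hsep y hy hyv)

lemma hConnected_moveEdge (hE : HConnected E) (he : e ∈ E) (hv : v ∈ e)
    (hsep : ∀ x ∈ e, x ≠ v → ¬ Reach (E.erase e) x u) : HConnected (moveEdge E e u v) := by
  have hsub : E.erase e ⊆ moveEdge E e u v := Finset.subset_insert _ _
  have hto : ∀ x ∈ e, Reach (moveEdge E e u v) x u := by
    intro x hx
    by_cases hxv : x = v
    · exact hxv ▸ ((reach_erase_of_forall_not_reach hE hsep).mono hsub).symm
    · exact reach_of_mem (Finset.mem_insert_self _ _)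
        (Finset.mem_insert_of_mem (Finset.mem_erase.mpr ⟨hxv, hx⟩)) (Finset.mem_insert_self _ _)
  refine hConnected_iff.mpr fun a b =>
    Relation.reflTransGen_closed ?_ a b (hConnected_iff.mp hE a b)
  rintro x y ⟨f, hf, hx, hy⟩
  by_cases hfe : f = e
  · subst hfe
    exact (hto x hx).trans (hto y hy).symm
  · exact reach_of_mem (hsub (Finset.mem_erase.mpr ⟨hfe, hf⟩)) hx hy

lemma not_isCycle_moveEdge (hT : IsSupertree k E) (he : e ∈ E)
    (hsep : ∀ x ∈ e, x ≠ v → ¬ Reach (E.erase e) x u) (he' : insert u (e.erase v) ∉ E)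
    (vs : List V) (es : List (Finset V)) : ¬ IsCycle (moveEdge E e u v) vs es := by
  intro hcyc
  by_cases he's : insert u (e.erase v) ∈ es
  · obtain ⟨x, hx, y, hy, hxy, hr⟩ := hcyc.exists_reach_erase he's
    rw [moveEdge, Finset.erase_insert fun h => he' (Finset.mem_of_mem_erase h)] at hr
    rcases Finset.mem_insert.mp hx with rfl | hx' <;> rcases Finset.mem_insert.mp hy with rfl | hy'
    · exact hxy rfl
    · exact hsep y (Finset.mem_of_mem_erase hy') (Finset.ne_of_mem_erase hy') hr.symm
    · exact hsep x (Finset.mem_of_mem_erase hx') (Finset.ne_of_mem_erase hx') hr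
    · exact not_reach_erase hT.2.2 he hxy (Finset.mem_of_mem_erase hx')
        (Finset.mem_of_mem_erase hy') hr
  · obtain ⟨hlen, hvs, hes, hesF, w, hw, hch⟩ := hcyc
    refine hT.2.2 vs es ⟨hlen, hvs, hes, fun f hf => ?_, w, hw, hch⟩
    rcases Finset.mem_insert.mp (hesF f hf) with rfl | hf'
    · exact absurd hf he's
    · exact Finset.mem_of_mem_erase hf'

lemma isSupertree_moveEdge (hT : IsSupertree k E) (he : e ∈ E) (hv : v ∈ e) (hu : u ∉ e)
    (hsep : ∀ x ∈ e, x ≠ v → ¬ Reach (E.erase e) x u) (he' : insert u (e.erase v) ∉ E) :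
    IsSupertree k (moveEdge E e u v) :=
  ⟨isUniform_moveEdge hT.1 he hv hu, hConnected_moveEdge hT.2.1 he hv hsep,
    not_isCycle_moveEdge hT he hsep he'⟩

lemma IsSupertree.exists_edge_forall_not_reach (hT : IsSupertree k E)
    (hv : 2 ≤ degree E v) :
    ∃ e ∈ E, v ∈ e ∧ ∀ x ∈ e, x ≠ v → ¬ Reach (E.erase e) x u := by
  have hatMostOne : ∀ e₁ ∈ E, ∀ e₂ ∈ E, e₁ ≠ e₂ → v ∈ e₁ → v ∈ e₂ →
      ∀ x₁ ∈ e₁, x₁ ≠ v → Reach (E.erase e₁) x₁ u →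
      ∀ x₂ ∈ e₂, x₂ ≠ v → ¬ Reach (E.erase e₂) x₂ u := by
    intro e₁ he₁ e₂ he₂ hne hv₁ hv₂ x₁ hx₁ hx₁v h₁ x₂ hx₂ hx₂v h₂
    rcases h₂.erase_or (e := e₁) with h | ⟨y, hy, h⟩
    · have h' : Reach (E.erase e₁) x₂ u := h.mono fun f hf => by simp at hf ⊢; tauto
      exact not_reach_erase hT.2.2 he₁ hx₁v hx₁ hv₁ (h₁.trans (h'.symm.trans
        (reach_of_mem (Finset.mem_erase.mpr ⟨hne.symm, he₂⟩) hx₂ hv₂)))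
    · exact not_reach_erase hT.2.2 he₂ hx₂v hx₂ hv₂
        ((h.mono (Finset.erase_subset _ _)).trans
          (reach_of_mem (Finset.mem_erase.mpr ⟨hne, he₁⟩) hy hv₁))
  obtain ⟨e₁, he₁, e₂, he₂, hne⟩ := Finset.one_lt_card.mp hv
  simp only [Finset.mem_filter] at he₁ he₂
  by_cases h : ∃ x ∈ e₁, x ≠ v ∧ Reach (E.erase e₁) x u
  · obtain ⟨x, hx, hxv, hx'⟩ := h
    exact ⟨e₂, he₂.1, he₂.2,
      hatMostOne e₁ he₁.1 e₂ he₂.1 hne he₁.2 he₂.2 x hx hxv hx'⟩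
  · push Not at h
    exact ⟨e₁, he₁.1, he₁.2, h⟩

lemma insert_erase_not_mem (hU : IsUniform k E) (hk : 2 ≤ k) (he : e ∈ E) (hv : v ∈ e)
    (huv : u ≠ v) (hsep : ∀ x ∈ e, x ≠ v → ¬ Reach (E.erase e) x u) :
    insert u (e.erase v) ∉ E := by
  intro h
  obtain ⟨x, hx⟩ : (e.erase v).Nonempty :=
    Finset.card_pos.mp (by rw [Finset.card_erase_of_mem hv, hU e he]; omega)
  have hne : insert u (e.erase v) ≠ e := fun h' => by
    have : v ∈ insert u (e.erase v) := by rw [h']; exact hv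
    simp [huv.symm] at this
  exact hsep x (Finset.mem_of_mem_erase hx) (Finset.ne_of_mem_erase hx)
    (reach_of_mem (Finset.mem_erase.mpr ⟨hne, h⟩) (Finset.mem_insert_of_mem hx)
      (Finset.mem_insert_self u _))

end MoveEdge

section Spectral

variable [Fintype V] {k : ℕ} {E : Finset (Finset V)} {x : V → ℝ}

def nonnegSphere (V : Type*) [Fintype V] (k : ℕ) : Set (V → ℝ) :=
  {x | (∀ v, 0 ≤ x v) ∧ ∑ v, x v ^ k = 1}

lemma isCompact_nonnegSphere (hk : k ≠ 0) : IsCompact (nonnegSphere V k) := by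
  refine (isCompact_univ_pi fun _ => isCompact_Icc (a := (0 : ℝ)) (b := 1)).of_isClosed_subset
    ?_ ?_
  · have : nonnegSphere V k = (⋂ v, {x | 0 ≤ x v}) ∩ {x | ∑ v, x v ^ k = 1} := by
      ext; simp [nonnegSphere]
    rw [this]
    exact (isClosed_iInter fun v => isClosed_le continuous_const (continuous_apply v)).inter
      (isClosed_eq (f := fun x : V → ℝ => ∑ v, x v ^ k) (by fun_prop) continuous_const)
  · rintro x ⟨hx0, hx1⟩ v -
    refine ⟨hx0 v, (pow_le_one_iff_of_nonneg (hx0 v) hk).mp ?_⟩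
    exact hx1 ▸ Finset.single_le_sum (fun i _ => pow_nonneg (hx0 i) k) (Finset.mem_univ v)

lemma exists_isMaxOn_qform [Nonempty V] (hk : k ≠ 0) (E : Finset (Finset V)) :
    ∃ x ∈ nonnegSphere V k, IsMaxOn (qform k E) (nonnegSphere V k) x := by
  obtain ⟨v₀⟩ := ‹Nonempty V›
  refine (isCompact_nonnegSphere hk).exists_isMaxOn ⟨Pi.single v₀ 1, fun v => ?_, ?_⟩
    (by unfold qform; fun_prop)
  · by_cases hv : v = v₀ <;> simp [hv]
  · simp [Pi.single_apply, zero_pow hk]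

lemma qrad_eq_of_isMaxOn (hx : x ∈ nonnegSphere V k)
    (hmax : IsMaxOn (qform k E) (nonnegSphere V k) x) : qrad k E = qform k E x := by
  refine IsGreatest.csSup_eq ⟨⟨x, hx.1, hx.2, rfl⟩, ?_⟩
  rintro r ⟨y, hy0, hy1, rfl⟩
  exact hmax ⟨hy0, hy1⟩

lemma qform_le_qrad_mul [Nonempty V] (hU : IsUniform k E) (hk : k ≠ 0) {y : V → ℝ}
    (hy0 : ∀ v, 0 ≤ y v) (hy : 0 < ∑ v, y v ^ k) :
    qform k E y ≤ qrad k E * ∑ v, y v ^ k := by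
  set c : ℝ := (∑ v, y v ^ k) ^ (-(k : ℝ)⁻¹)
  have hc : 0 < c := Real.rpow_pos_of_pos hy _
  have hck : c ^ k * ∑ v, y v ^ k = 1 := by
    rw [← Real.rpow_natCast, ← Real.rpow_mul hy.le, neg_mul,
      inv_mul_cancel₀ (by exact_mod_cast hk), Real.rpow_neg_one, inv_mul_cancel₀ hy.ne']
  obtain ⟨x, hx, hmax⟩ := exists_isMaxOn_qform hk E
  have hcy : (fun v => c * y v) ∈ nonnegSphere V k :=
    ⟨fun v => mul_nonneg hc.le (hy0 v), by simp only [mul_pow, ← Finset.mul_sum, hck]⟩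
  have h : qform k E (fun v => c * y v) ≤ qrad k E := qrad_eq_of_isMaxOn hx hmax ▸ hmax hcy
  rw [qform_smul hU] at h
  calc qform k E y = c ^ k * qform k E y * ∑ v, y v ^ k := by
        rw [mul_comm (c ^ k), mul_assoc, hck, mul_one]
    _ ≤ qrad k E * ∑ v, y v ^ k := mul_le_mul_of_nonneg_right h hy.le

lemma exists_pos_le_one_mul_lt {a : ℝ} (ha : 0 < a) {b : ℝ} (hb : 0 ≤ b) :
    ∃ s : ℝ, 0 < s ∧ s ≤ 1 ∧ b * s < a := by
  obtain ⟨s, hs, hsa⟩ := exists_pos_mul_lt ha b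
  exact ⟨min s 1, lt_min hs one_pos, min_le_right _ _,
    (mul_le_mul_of_nonneg_left (min_le_left _ _) hb).trans_lt hsa⟩

lemma eq_zero_of_isMaxOn_of_eq_zero [Nonempty V] (hU : IsUniform k E) (hk : 2 ≤ k)
    (hx : x ∈ nonnegSphere V k) (hmax : IsMaxOn (qform k E) (nonnegSphere V k) x)
    {e : Finset V} (he : e ∈ E) {i j : V} (hi : i ∈ e) (hi0 : x i = 0) (hj : j ∈ e) :
    x j = 0 := by
  have hq := qrad_eq_of_isMaxOn hx hmax
  obtain ⟨hx0, hx1⟩ := hx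
  by_contra hj0
  set Z := Finset.univ.filter fun v => x v = 0
  set z := (e.filter fun v => x v = 0).card
  set P := ∏ v ∈ e.filter (fun v => ¬ x v = 0), x v
  have hP : 0 < P := Finset.prod_pos fun v hv => (hx0 v).lt_of_ne' (Finset.mem_filter.mp hv).2
  have hz : z + 1 ≤ k := by
    have := Finset.card_filter_add_card_filter_not (s := e) (p := fun v => x v = 0)
    have : 0 < (e.filter fun v => ¬ x v = 0).card :=
      Finset.card_pos.mpr ⟨j, Finset.mem_filter.mpr ⟨hj, hj0⟩⟩
    have := hU e he
    omega
  have hZ : 0 ≤ qrad k E * Z.card := mul_nonneg (hq ▸ qform_nonneg hx0) Z.card.cast_nonneg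
  obtain ⟨s, hs, hs1, hsP⟩ := exists_pos_le_one_mul_lt
    (mul_pos (Nat.cast_pos.mpr (by omega : 0 < k)) hP) hZ
  set y : V → ℝ := fun v => if x v = 0 then s else x v
  have hxy : ∀ v, x v ≤ y v := fun v => by by_cases h : x v = 0 <;> simp [y, h, hs.le]
  have hysum : ∑ v, y v ^ k = Z.card * s ^ k + 1 := by
    simp only [y, ite_pow, Finset.sum_ite, Finset.sum_const, nsmul_eq_mul, ← hx1]
    exact congrArg _ (Finset.sum_filter_of_ne fun v _ h hv => h (by rw [hv, zero_pow (by omega)]))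
  have hyprod : ∏ v ∈ e, y v = s ^ z * P := by
    rw [Finset.prod_ite, Finset.prod_const]
  have hlow := qform_add_le (k := k) hx0 hxy he
  rw [hyprod, Finset.prod_eq_zero hi hi0, sub_zero, ← hq] at hlow
  have hup := qform_le_qrad_mul hU (by omega) (fun v => (hx0 v).trans (hxy v))
    (by rw [hysum]; positivity)
  rw [hysum] at hup
  have hsk : s ^ k ≤ s ^ z * s := by rw [← pow_succ]; exact pow_le_pow_of_le_one hs.le hs1 hz
  have : k * (s ^ z * P) < k * (s ^ z * P) := calc
    _ ≤ qrad k E * Z.card * s ^ k := by linarith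
    _ ≤ qrad k E * Z.card * (s ^ z * s) := mul_le_mul_of_nonneg_left hsk hZ
    _ = (qrad k E * Z.card * s) * s ^ z := by ring
    _ < (k * P) * s ^ z := mul_lt_mul_of_pos_right hsP (pow_pos hs z)
    _ = k * (s ^ z * P) := by ring
  exact lt_irrefl _ this

lemma pos_of_isMaxOn [Nonempty V] (hT : IsSupertree k E) (hk : 2 ≤ k)
    (hx : x ∈ nonnegSphere V k) (hmax : IsMaxOn (qform k E) (nonnegSphere V k) x) (w : V) :
    0 < x w := by
  refine (hx.1 w).lt_of_ne' fun hw => ?_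
  obtain ⟨p, hp⟩ : ∃ p, x p ≠ 0 := by
    by_contra! h
    simpa [h, zero_pow (by omega : k ≠ 0)] using hx.2
  obtain ⟨e, he, i, hi, j, hj, hi0, hj0⟩ :=
    (hConnected_iff.mp hT.2.1 w p).exists_edge_crossing (S := {v | x v = 0}) hw hp
  exact hj0 (eq_zero_of_isMaxOn_of_eq_zero hT.1 hk hx hmax he hi hi0 hj)

lemma hasDerivAt_qform_sub_qrad_mul [Nonempty V] (hU : IsUniform k E) (hk : k ≠ 0)
    (hx : x ∈ nonnegSphere V k) (hmax : IsMaxOn (qform k E) (nonnegSphere V k) x)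
    (hpos : ∀ v, 0 < x v) (c : V → ℝ) :
    HasDerivAt (fun t => qform k E (fun v => x v + t * c v) -
      qrad k E * ∑ v, (x v + t * c v) ^ k) 0 0 := by
  have hdiff : DifferentiableAt ℝ (fun t => qform k E (fun v => x v + t * c v) -
      qrad k E * ∑ v, (x v + t * c v) ^ k) 0 := by
    unfold qform; fun_prop
  have hnear : ∀ᶠ t in nhds (0 : ℝ), ∀ v, 0 < x v + t * c v :=
    Filter.eventually_all.mpr fun v => Filter.Tendsto.eventually_const_lt (hpos v)
      ((by fun_prop : Continuous fun t : ℝ => x v + t * c v).tendsto' 0 (x v) (by simp))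
  have hloc : IsLocalMax (fun t => qform k E (fun v => x v + t * c v) -
      qrad k E * ∑ v, (x v + t * c v) ^ k) 0 := by
    filter_upwards [hnear] with t ht
    have hsum : 0 < ∑ v, (x v + t * c v) ^ k :=
      Finset.sum_pos (fun v _ => pow_pos (ht v) k) Finset.univ_nonempty
    simp only [zero_mul, add_zero, hx.2, mul_one, ← qrad_eq_of_isMaxOn hx hmax, sub_self]
    exact sub_nonpos.mpr (qform_le_qrad_mul hU hk (fun v => (ht v).le) hsum)
  simpa [hloc.hasDerivAt_eq_zero hdiff.hasDerivAt] using hdiff.hasDerivAt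

lemma exists_pos_lt_neg_mul_le {f : ℝ → ℝ} (hf : HasDerivAt f 0 0) (h0 : f 0 = 0)
    {ε δ : ℝ} (hε : 0 < ε) (hδ : 0 < δ) :
    ∃ t, 0 < t ∧ t < δ ∧ -(ε * t) ≤ f t := by
  have hsmall := (hasDerivAt_iff_isLittleO.mp hf).def hε
  have hδ' : ∀ᶠ t in nhds (0 : ℝ), t < δ :=
    Filter.Tendsto.eventually_lt_const hδ Filter.tendsto_id
  obtain ⟨t, ⟨hft, htδ⟩, ht⟩ := (((hsmall.and hδ').filter_mono nhdsWithin_le_nhds).and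
    (self_mem_nhdsWithin (s := Set.Ioi (0 : ℝ)))).exists
  simp only [h0, sub_zero, smul_zero, Real.norm_eq_abs, abs_of_pos ht] at hft
  exact ⟨t, ht, htδ, neg_le_of_abs_le hft⟩

lemma qrad_lt_qrad_moveEdge [Nonempty V] (hU : IsUniform k E) (hk : k ≠ 0)
    (hx : x ∈ nonnegSphere V k) (hmax : IsMaxOn (qform k E) (nonnegSphere V k) x)
    (hpos : ∀ v, 0 < x v) {e : Finset V} {u v : V} (he : e ∈ E) (hv : v ∈ e) (hu : u ∉ e)
    (he' : insert u (e.erase v) ∉ E) (hxuv : x v ≤ x u) :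
    qrad k E < qrad k (moveEdge E e u v) := by
  have huv : u ≠ v := fun h => hu (h ▸ hv)
  set c : V → ℝ := fun w => if w = u then 1 else if w = v then -1 else 0
  set P := ∏ i ∈ e.erase v, x i
  have hkP : 0 < (k : ℝ) * P :=
    mul_pos (Nat.cast_pos.mpr (Nat.pos_of_ne_zero hk)) (Finset.prod_pos fun i _ => hpos i)
  obtain ⟨t, ht, htv, hlow⟩ := exists_pos_lt_neg_mul_le
    (hasDerivAt_qform_sub_qrad_mul hU hk hx hmax hpos c)
    (by simp [hx.2, ← qrad_eq_of_isMaxOn hx hmax]) hkP (hpos v)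
  set y : V → ℝ := fun w => x w + t * c w
  have hyu : y u = x u + t := by simp [y, c]
  have hyv : y v = x v - t := by simp [y, c, huv.symm]; ring
  have hyP : ∏ i ∈ e.erase v, y i = P := Finset.prod_congr rfl fun i hi => by
    have : i ≠ u := fun h => hu (h ▸ Finset.mem_of_mem_erase hi)
    simp [y, c, this, Finset.ne_of_mem_erase hi]
  have hy0 : ∀ w, 0 ≤ y w := by
    intro w
    by_cases hwu : w = u
    · subst hwu; rw [hyu]; linarith [hpos w]
    by_cases hwv : w = v
    · subst hwv; rw [hyv]; linarith
    simp [y, c, hwu, hwv, (hpos w).le]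
  have hsum : 0 < ∑ w, y w ^ k := lt_of_lt_of_le (pow_pos (by rw [hyu]; linarith [hpos u]) k)
    (Finset.single_le_sum (fun w _ => pow_nonneg (hy0 w) k) (Finset.mem_univ u))
  have hgain : 2 * (k * P * t) ≤ (y u ^ k - y v ^ k) + k * (y u - y v) * P := by
    have hpow : y v ^ k ≤ y u ^ k := pow_le_pow_left₀ (hy0 v) (by rw [hyu, hyv]; linarith) k
    have hprod : 0 ≤ (k : ℝ) * (x u - x v) * P :=
      mul_nonneg (mul_nonneg k.cast_nonneg (sub_nonneg.mpr hxuv))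
        (Finset.prod_nonneg fun i _ => (hpos i).le)
    rw [hyu, hyv] at hpow ⊢
    linarith [show (k : ℝ) * (x u + t - (x v - t)) * P = k * (x u - x v) * P + 2 * (k * P * t) by
      ring]
  have hup := qform_le_qrad_mul (isUniform_moveEdge hU he hv hu) hk hy0 hsum
  rw [qform_moveEdge he hv hu he' y, hyP] at hup
  have := mul_pos hkP ht
  exact lt_of_mul_lt_mul_right (by linarith) hsum.le

lemma IsSupertree.eq_of_three_le_degree [Nonempty V] (hT : IsSupertree k E) (hk : 2 ≤ k)
    (hmax : ∀ E' : Finset (Finset V), IsSupertree k E' → pendentCount E' = pendentCount E →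
      qrad k E' ≤ qrad k E)
    {u v : V} (hu : 3 ≤ degree E u) (hv : 3 ≤ degree E v) : u = v := by
  by_contra huv
  obtain ⟨x, hx, hxmax⟩ := exists_isMaxOn_qform (by omega : k ≠ 0) E
  wlog hxuv : x v ≤ x u generalizing u v
  · exact this hv hu (Ne.symm huv) (le_of_not_ge hxuv)
  obtain ⟨e, he, hve, hsep⟩ :=
    hT.exists_edge_forall_not_reach (u := u) (by omega : 2 ≤ degree E v)
  have hue : u ∉ e := fun h => hsep u h huv (.refl _ _)
  have he' := insert_erase_not_mem hT.1 hk he hve huv hsep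
  have hpend : pendentCount (moveEdge E e u v) = pendentCount E := by
    refine congrArg Finset.card (Finset.filter_congr fun w _ => ?_)
    have := degree_moveEdge he hve hue he' w
    split_ifs at this <;> subst_vars <;> omega
  exact (hmax _ (isSupertree_moveEdge hT he hve hue hsep he') hpend).not_gt
    (qrad_lt_qrad_moveEdge hT.1 (by omega) hx hxmax (pos_of_isMaxOn hT hk hx hxmax) he hve hue
      he' hxuv)

end Spectral

section DegreeSequence

variable [Fintype V] {E : Finset (Finset V)}

lemma eq_replicate_two_add_replicate_one {s : Multiset ℕ} (h : ∀ a ∈ s, a = 1 ∨ a = 2) :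
    s = Multiset.replicate (s.count 2) 2 + Multiset.replicate (s.count 1) 1 := by
  ext a
  simp only [Multiset.count_add, Multiset.count_replicate]
  by_cases h1 : a = 1
  · subst h1; simp
  by_cases h2 : a = 2
  · subst h2; simp
  rw [if_neg (Ne.symm h2), if_neg (Ne.symm h1),
    Multiset.count_eq_zero.mpr fun ha => (h a ha).elim h1 h2]

lemma degSeq_eq_cons (E : Finset (Finset V)) (w : V) :
    degSeq E = degree E w ::ₘ (Finset.univ.erase w).val.map (degree E) := by
  rw [degSeq, Finset.erase_val, ← Multiset.map_cons, Multiset.cons_erase (Finset.mem_univ_val w)]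

lemma count_one_degSeq (E : Finset (Finset V)) : (degSeq E).count 1 = pendentCount E := by
  simp [degSeq, pendentCount, Multiset.count_map, Finset.card, eq_comm]

lemma sum_degree (E : Finset (Finset V)) : ∑ v, degree E v = ∑ e ∈ E, e.card := by
  simp only [degree, Finset.card_filter]
  rw [Finset.sum_comm]
  simp

lemma sum_degSeq {k : ℕ} (hU : IsUniform k E) : (degSeq E).sum = k * E.card := by
  rw [degSeq, ← Finset.sum_eq_multiset_sum, sum_degree, Finset.sum_congr rfl hU]
  simp [mul_comm]

lemma degSeq_eq_of_forall_ne_le_two {w : V} (hdeg : ∀ v, 1 ≤ degree E v)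
    (hw : 2 ≤ degree E w) (hle : ∀ v ≠ w, degree E v ≤ 2) :
    degSeq E = degree E w ::ₘ (Multiset.replicate (Fintype.card V - pendentCount E - 1) 2 +
      Multiset.replicate (pendentCount E) 1) := by
  set M := (Finset.univ.erase w).val.map (degree E)
  have hM : ∀ a ∈ M, a = 1 ∨ a = 2 := by
    simp only [M, Multiset.mem_map, Finset.mem_val]
    rintro a ⟨v, hv, rfl⟩
    have := hdeg v
    have := hle v (Finset.ne_of_mem_erase hv)
    omega
  have h1 : M.count 1 = pendentCount E := by
    rw [← count_one_degSeq, degSeq_eq_cons E w, Multiset.count_cons_of_ne (by omega)]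
  have h2 : M.count 2 = Fintype.card V - pendentCount E - 1 := by
    have hcard : M.card = Fintype.card V - 1 := by simp [M]
    have := congrArg Multiset.card (eq_replicate_two_add_replicate_one hM)
    simp only [Multiset.card_add, Multiset.card_replicate] at this
    omega
  rw [degSeq_eq_cons E w, ← h2, ← h1]
  exact congrArg _ (eq_replicate_two_add_replicate_one hM)

lemma exists_forall_ne_degree_le_two (hdeg : ∀ v, 1 ≤ degree E v)
    (hpend : pendentCount E < Fintype.card V)
    (huniq : ∀ u v, 3 ≤ degree E u → 3 ≤ degree E v → u = v) :
    ∃ w, 2 ≤ degree E w ∧ ∀ v ≠ w, degree E v ≤ 2 := by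
  by_cases h : ∃ w, 3 ≤ degree E w
  · obtain ⟨w, hw⟩ := h
    exact ⟨w, by omega, fun v hvw => not_lt.mp fun hv => hvw (huniq v w hv hw)⟩
  push Not at h
  obtain ⟨w, hw⟩ : ∃ w, degree E w ≠ 1 := by
    by_contra! h1
    simp [pendentCount, h1] at hpend
  exact ⟨w, by have := hdeg w; omega, fun v _ => by have := h v; omega⟩

end DegreeSequence

theorem max_pendent_degree_sequence_general (k n m q : ℕ) (hk : 2 ≤ k)
    {V : Type*} [Fintype V]
    (E : Finset (Finset V)) (hG : IsSupertree k E)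
    (hn : Fintype.card V = n) (hm : E.card = m)
    (hq : pendentCount E = q)
    (hq1 : n - m + 1 ≤ q) (hq2 : q ≤ n - 2)
    (hmax : ∀ E' : Finset (Finset V), IsSupertree k E' → pendentCount E' = q →
      qrad k E' ≤ qrad k E) :
    degSeq E = (q + 1 + m - n) ::ₘ (Multiset.replicate (n - q - 1) 2 +
      Multiset.replicate q 1) := by
  have hV : 2 ≤ Fintype.card V := by omega
  have : Nonempty V := Fintype.card_pos_iff.mp (by omega)
  have hdeg := hG.2.1.one_le_degree hV
  obtain ⟨w, hw, hle⟩ := exists_forall_ne_degree_le_two hdeg (by omega) fun u v hu hv =>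
    hG.eq_of_three_le_degree hk (fun E' h h' => hmax E' h (h'.trans hq)) hu hv
  have hsum := sum_degSeq hG.1
  rw [degSeq_eq_of_forall_ne_le_two hdeg hw hle] at hsum ⊢
  simp only [Multiset.sum_cons, Multiset.sum_add, Multiset.sum_replicate, smul_eq_mul] at hsum
  have hcard := hG.card_eq (by omega) hV
  have : (k - 1) * m = k * m - m := Nat.sub_one_mul k m
  subst hn hm hq
  congr 1
  omega

/-- a maximizer of the signless Laplacian spectral radius among
`k`-uniform supertrees with `n` vertices and `q` pendent vertices
(`n - m + 1 ≤ q ≤ n - 2`) has degree sequence `(q+1+m-n, 2,…,2, 1,…,1)` with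
`n-q-1` twos and `q` ones. -/
theorem max_pendent_degree_sequence (k n m q : ℕ) (hk : 2 ≤ k)
    {V : Type*} [Fintype V] [DecidableEq V]
    (E : Finset (Finset V)) (hG : IsSupertree k E)
    (hn : Fintype.card V = n) (hm : E.card = m)
    (hq : pendentCount E = q)
    (hq1 : n - m + 1 ≤ q) (hq2 : q ≤ n - 2)
    (hmax : ∀ E' : Finset (Finset V), IsSupertree k E' → pendentCount E' = q →
      qrad k E' ≤ qrad k E) :
    degSeq E = (q + 1 + m - n) ::ₘ (Multiset.replicate (n - q - 1) 2 +
      Multiset.replicate q 1) :=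
  max_pendent_degree_sequence_general k n m q hk E hG hn hm hq hq1 hq2 hmax

end SLT
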